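/- Let p ≥ 2 be an integer and r a real number with 0 < r < 1. Let w, w' ∈ ℝ^p satisfy wᵢ ≥ 0 and w'ᵢ ≥ 0 for all i, Σᵢ wᵢ = Σᵢ w'ᵢ = 1, and Σᵢ wᵢ² < Σᵢ (w'ᵢ)². Then Q(w,r) < Q(w',r); that is, at any fixed multicollinearity level r, the variance of the group effect estimator is a strictly increasing function of the distance δ = p·Σᵢwᵢ² − 1 between the weight vector and the uniform weight vector. -/

import Mathlib

/-!
Writing `J` for the all-ones matrix, `A(p,r) = (1 - r) I + r J` and `J² = p J`, so
`A(p,r)⁻¹ = (1 - r)⁻¹ (I - c J)` with `c = r / (1 + (p - 1) r)`. Hence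
`Q(w,r) = (1 - r)⁻¹ (Σ wᵢ² - c (Σ wᵢ)²)`, which on weights summing to `1` is an increasing
affine function of `Σ wᵢ²`.
-/

open Matrix

/-- The `p × p` Gram/correlation matrix of a uniform model at multicollinearity
level `r`: diagonal entries `1`, off-diagonal entries `r`. -/
noncomputable def unifMat (p : ℕ) (r : ℝ) : Matrix (Fin p) (Fin p) ℝ :=
  fun i j => if i = j then 1 else r

/-- `Q(w,r) = wᵀ A(p,r)⁻¹ w`. -/
noncomputable def Qform (p : ℕ) (r : ℝ) (w : Fin p → ℝ) : ℝ :=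
  w ⬝ᵥ (unifMat p r)⁻¹.mulVec w

def onesMatrix (n K : Type*) [One K] : Matrix n n K := of fun _ _ => 1

section

variable {n K : Type*} [Fintype n]

lemma onesMatrix_mulVec [Semiring K] (w : n → K) :
    onesMatrix n K *ᵥ w = fun _ => ∑ i, w i := by
  ext
  simp [onesMatrix, mulVec, dotProduct]

lemma onesMatrix_mul_self [Semiring K] :
    onesMatrix n K * onesMatrix n K = (Fintype.card n : K) • onesMatrix n K := by
  ext
  simp [onesMatrix, mul_apply]

lemma dotProduct_onesMatrix_mulVec [Semiring K] (w : n → K) :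
    w ⬝ᵥ (onesMatrix n K *ᵥ w) = (∑ i, w i) ^ 2 := by
  rw [onesMatrix_mulVec, sq, dotProduct, Finset.sum_mul]

lemma inv_smul_one_add_smul_onesMatrix [DecidableEq n] [Field K] {α β : K} (hα : α ≠ 0)
    (hαβ : α + Fintype.card n * β ≠ 0) :
    (α • 1 + β • onesMatrix n K)⁻¹ =
      α⁻¹ • (1 - (β / (α + Fintype.card n * β)) • onesMatrix n K) := by
  refine inv_eq_right_inv ?_
  simp only [add_mul, mul_sub, smul_mul_assoc, mul_smul_comm, mul_one, one_mul,
    onesMatrix_mul_self]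
  match_scalars
  · simp [hα]
  · simp only [mul_one]
    rw [mul_comm β, div_mul_cancel₀ _ hαβ, sub_self, mul_zero]

end

lemma unifMat_eq (p : ℕ) (r : ℝ) : unifMat p r = (1 - r) • 1 + r • onesMatrix (Fin p) ℝ := by
  ext i j
  by_cases h : i = j <;> simp [unifMat, onesMatrix, one_apply, h]

lemma Qform_eq (p : ℕ) {r : ℝ} (hr1 : r ≠ 1) (hpr : 1 - r + p * r ≠ 0) (w : Fin p → ℝ) :
    Qform p r w = (1 - r)⁻¹ * (∑ i, w i ^ 2 - r / (1 - r + p * r) * (∑ i, w i) ^ 2) := by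
  have h1r : 1 - r ≠ 0 := sub_ne_zero.2 hr1.symm
  rw [Qform, unifMat_eq, inv_smul_one_add_smul_onesMatrix h1r (by simpa using hpr),
    smul_mulVec, sub_mulVec, smul_mulVec, one_mulVec, dotProduct_smul, dotProduct_sub,
    dotProduct_smul, dotProduct_onesMatrix_mulVec, Fintype.card_fin, smul_eq_mul, smul_eq_mul]
  simp only [dotProduct, sq]

theorem Qform_strict_mono_in_sumsq_general (p : ℕ) (r : ℝ)
    (hr0 : 0 < r) (hr1 : r < 1) (w w' : Fin p → ℝ)
    (hw1 : (∑ i, w i) = 1) (hw'1 : (∑ i, w' i) = 1)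
    (hlt : (∑ i, (w i) ^ 2) < ∑ i, (w' i) ^ 2) :
    Qform p r w < Qform p r w' := by
  have hpr : 0 < 1 - r + p * r := by
    have := mul_nonneg p.cast_nonneg hr0.le
    linarith
  rw [Qform_eq p hr1.ne hpr.ne', Qform_eq p hr1.ne hpr.ne', hw1, hw'1]
  gcongr

/-- among nonnegative weight vectors summing to 1, the variance
`Q(·,r)` is strictly increasing in `Σᵢ wᵢ²` (equivalently in the distance
`δ = p·Σᵢ wᵢ² − 1` from the uniform weight vector). -/
theorem Qform_strict_mono_in_sumsq (p : ℕ) (hp : 2 ≤ p) (r : ℝ)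
    (hr0 : 0 < r) (hr1 : r < 1) (w w' : Fin p → ℝ)
    (hw0 : ∀ i, 0 ≤ w i) (hw'0 : ∀ i, 0 ≤ w' i)
    (hw1 : (∑ i, w i) = 1) (hw'1 : (∑ i, w' i) = 1)
    (hlt : (∑ i, (w i) ^ 2) < ∑ i, (w' i) ^ 2) :
    Qform p r w < Qform p r w' :=
  Qform_strict_mono_in_sumsq_general p r hr0 hr1 w w' hw1 hw'1 hlt
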